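/- arXiv:1907.09105 — 3 statements merged into one kernel-verified Lean document; each statement's English description precedes it below -/
import Mathlib

section
/- The non-circularity axiom is sound: in any model (i.e., a Kripke model with definition functions DEF_w satisfying well-foundedness: if p occurs in DEF_w(q) then DEF_w(p)=p), for every atom p and boolean formula P such that p occurs in P and P ≠ p, we have def_w(p) ≠ def_w(P). -/
inductive BForm (α : Type) : Type where
  | atom : α → BForm α
  | neg : BForm α → BForm α
  | conj : BForm α → BForm α → BForm α
  deriving DecidableEq

def occurs {α : Type} (p : α) : BForm α → Prop
  | .atom q => q = p
  | .neg P => occurs p P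
  | .conj P Q => occurs p P ∨ occurs p Q

def defw {α : Type} (DEF : α → BForm α) : BForm α → BForm α
  | .atom p => DEF p
  | .neg P => .neg (defw DEF P)
  | .conj P Q => .conj (defw DEF P) (defw DEF Q)

def blen {α : Type} : BForm α → Nat
  | .atom _ => 1
  | .neg P => blen P + 1
  | .conj P Q => blen P + blen Q + 1

lemma blen_pos {α : Type} (P : BForm α) : 1 ≤ blen P := by
  cases P <;> simp [blen] <;> omega

lemma blen_ge {α : Type} (DEF : α → BForm α) (p : α) (P : BForm α)
    (h : occurs p P) : blen (DEF p) ≤ blen (defw DEF P) := by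
  induction P with
  | atom q => cases h; rfl
  | neg P ih =>
      have := ih h
      simp [defw, blen]; omega
  | conj P Q ihP ihQ =>
      have hP := blen_pos (defw DEF P)
      have hQ := blen_pos (defw DEF Q)
      rcases h with h | h
      · have := ihP h; simp [defw, blen]; omega
      · have := ihQ h; simp [defw, blen]; omega

lemma blen_gt {α : Type} (DEF : α → BForm α) (p : α) (P : BForm α)
    (h : occurs p P) (hne : P ≠ .atom p) : blen (DEF p) < blen (defw DEF P) := by
  cases P with
  | atom q => cases h; exact absurd rfl hne
  | neg P =>
      have := blen_ge DEF p P h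
      simp [defw, blen]; omega
  | conj P Q =>
      have hP := blen_pos (defw DEF P)
      have hQ := blen_pos (defw DEF Q)
      rcases h with h | h
      · have := blen_ge DEF p P h; simp [defw, blen]; omega
      · have := blen_ge DEF p Q h; simp [defw, blen]; omega

theorem noncircularity_sound {α : Type} (DEF : α → BForm α)
    (hwf : ∀ p q : α, occurs p (DEF q) → DEF p = .atom p) :
    ∀ (p : α) (P : BForm α), occurs p P → P ≠ .atom p →
      defw DEF (.atom p) ≠ defw DEF P := by
  intro p P hocc hne heq
  have := blen_gt DEF p P hocc hne
  rw [show defw DEF (.atom p) = DEF p from rfl] at heq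
  rw [← heq] at this
  omega
end

section
/- Let Γ be an equivalence relation ≡_Γ on boolean formulas over a finite atom set, satisfying the pattern axioms (¬-pattern, ∧-pattern, pattern mismatch), occurrence substitution closure (if p ≡_Γ Q and R ≡_Γ S then R ≡_Γ [k:p↦Q]S for any occurrence k of p in S), and non-circularity (never p ≡_Γ P with p occurring in P and P ≠ p). Then for every atom p, the equivalence class {Q | p ≡_Γ Q} is finite. -/
/-- The number of occurrences of the atom `p` in a boolean formula. -/
def occCount {α : Type} [DecidableEq α] (p : α) : BForm α → ℕ
  | .atom q => if q = p then 1 else 0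
  | .neg P => occCount p P
  | .conj P Q => occCount p P + occCount p Q

/-- Replace the `k`-th occurrence (counted from the left, starting at 1)
of the atom `p` by `R`. -/
def substOcc {α : Type} [DecidableEq α] (p : α) (R : BForm α) : ℕ → BForm α → BForm α
  | k, .atom q => if q = p ∧ k = 1 then R else .atom q
  | k, .neg P => .neg (substOcc p R k P)
  | k, .conj P Q =>
      if k ≤ occCount p P then .conj (substOcc p R k P) Q
      else .conj P (substOcc p R (k - occCount p P) Q)

lemma occCount_pos_of_occurs {α : Type} [DecidableEq α] {p : α} {S : BForm α}
    (h : occurs p S) : 1 ≤ occCount p S := by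
  induction S with
  | atom q =>
      have h' : q = p := h
      simp [occCount, h']
  | neg P ih => exact ih h
  | conj P Q ihP ihQ =>
      rcases (h : occurs p P ∨ occurs p Q) with h | h
      · have := ihP h; simp only [occCount]; omega
      · have := ihQ h; simp only [occCount]; omega

lemma occurs_substOcc {α : Type} [DecidableEq α] {q r : α} {Q' : BForm α}
    (hr : occurs r Q') : ∀ (S : BForm α) (k : ℕ), 1 ≤ k → k ≤ occCount q S →
    occurs r (substOcc q Q' k S) := by
  intro S
  induction S with
  | atom a =>
      intro k hk1 hk2
      by_cases ha : a = q
      · have hk : k = 1 := by simp [occCount, ha] at hk2; omega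
        simpa [substOcc, ha, hk] using hr
      · simp [occCount, ha] at hk2; omega
  | neg P ih =>
      intro k hk1 hk2
      exact ih k hk1 hk2
  | conj P Q ihP ihQ =>
      intro k hk1 hk2
      simp only [occCount] at hk2
      by_cases h : k ≤ occCount q P
      · have : substOcc q Q' k (.conj P Q) = .conj (substOcc q Q' k P) Q := by
          simp [substOcc, h]
        rw [this]
        exact Or.inl (ihP k hk1 h)
      · have : substOcc q Q' k (.conj P Q) = .conj P (substOcc q Q' (k - occCount q P) Q) := by
          simp [substOcc, h]
        rw [this]
        exact Or.inr (ihQ (k - occCount q P) (by omega) (by omega))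

lemma substOcc_ne_atom {α : Type} [DecidableEq α] {q : α} {Q' : BForm α} {S : BForm α}
    (hS : ∀ a : α, S ≠ .atom a) (k : ℕ) : ∀ a : α, substOcc q Q' k S ≠ .atom a := by
  cases S with
  | atom a => exact absurd rfl (hS a)
  | neg P => intro a; simp [substOcc]
  | conj P Q =>
      intro a
      by_cases h : k ≤ occCount q P <;> simp [substOcc, h]

/-- Key structural lemma: the set of non-atomic members of the class of `S` is
finite, provided the class of every atom occurring in some non-atomic member
of the class is finite, and the class has some non-atomic member `M`. -/
lemma key_finite {α : Type} [DecidableEq α]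
    (E : BForm α → BForm α → Prop) (hE : Equivalence E)
    (hneg : ∀ P Q : BForm α, E (.neg P) (.neg Q) ↔ E P Q)
    (hconj : ∀ P Q R S : BForm α, E (.conj P Q) (.conj R S) ↔ E P R ∧ E Q S)
    (hmis : ∀ P Q R : BForm α, ¬ E (.neg P) (.conj Q R)) :
    ∀ (M : BForm α), (∀ a : α, M ≠ .atom a) → ∀ S : BForm α, E S M →
    (∀ (q : α) (T : BForm α), E S T → (∀ a : α, T ≠ .atom a) → occurs q T →
      {Q : BForm α | E (.atom q) Q}.Finite) →
    {T : BForm α | E S T ∧ ∀ a : α, T ≠ .atom a}.Finite := by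
  intro M
  induction M with
  | atom a => intro hna; exact absurd rfl (hna a)
  | neg P ih =>
      intro _ S hSM hyp
      -- the class of P is finite
      have hPfin : {R : BForm α | E P R}.Finite := by
        by_cases h : ∃ a : α, E P (.atom a)
        · obtain ⟨a, ha⟩ := h
          have hfin : {Q : BForm α | E (.atom a) Q}.Finite := by
            refine hyp a (.neg (.atom a)) (hE.trans hSM ((hneg P (.atom a)).mpr ha))
              (by intro b; simp) ?_
            exact (rfl : a = a)
          refine hfin.subset ?_
          intro R hR
          exact hE.trans (hE.symm ha) hR
        · push_neg at h
          have hPna : ∀ a : α, P ≠ .atom a := by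
            intro a hPa
            exact h a (hPa ▸ hE.refl _)
          have hXP : {T : BForm α | E P T ∧ ∀ a : α, T ≠ .atom a}.Finite := by
            refine ih hPna P (hE.refl P) ?_
            intro q T hT hTna hq
            exact hyp q (.neg T) (hE.trans hSM ((hneg P T).mpr hT)) (by intro b; simp) hq
          refine hXP.subset ?_
          intro R hR
          refine ⟨hR, ?_⟩
          intro a hRa
          exact h a (hRa ▸ hR)
      refine (hPfin.image BForm.neg).subset ?_
      rintro T ⟨hT, hTna⟩
      have hMT : E (.neg P) T := hE.trans (hE.symm hSM) hT
      cases T with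
      | atom a => exact absurd rfl (hTna a)
      | neg T' => exact ⟨T', (hneg P T').mp hMT, rfl⟩
      | conj T1 T2 => exact absurd hMT (hmis P T1 T2)
  | conj P Q ihP ihQ =>
      intro _ S hSM hyp
      have hPfin : {R : BForm α | E P R}.Finite := by
        by_cases h : ∃ a : α, E P (.atom a)
        · obtain ⟨a, ha⟩ := h
          have hfin : {R : BForm α | E (.atom a) R}.Finite := by
            refine hyp a (.conj (.atom a) Q)
              (hE.trans hSM ((hconj P Q (.atom a) Q).mpr ⟨ha, hE.refl Q⟩))
              (by intro b; simp) ?_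
            exact Or.inl (rfl : a = a)
          refine hfin.subset ?_
          intro R hR
          exact hE.trans (hE.symm ha) hR
        · push_neg at h
          have hPna : ∀ a : α, P ≠ .atom a := by
            intro a hPa
            exact h a (hPa ▸ hE.refl _)
          have hXP : {T : BForm α | E P T ∧ ∀ a : α, T ≠ .atom a}.Finite := by
            refine ihP hPna P (hE.refl P) ?_
            intro q T hT hTna hq
            refine hyp q (.conj T Q)
              (hE.trans hSM ((hconj P Q T Q).mpr ⟨hT, hE.refl Q⟩))
              (by intro b; simp) (Or.inl hq)
          refine hXP.subset ?_
          intro R hR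
          refine ⟨hR, ?_⟩
          intro a hRa
          exact h a (hRa ▸ hR)
      have hQfin : {R : BForm α | E Q R}.Finite := by
        by_cases h : ∃ a : α, E Q (.atom a)
        · obtain ⟨a, ha⟩ := h
          have hfin : {R : BForm α | E (.atom a) R}.Finite := by
            refine hyp a (.conj P (.atom a))
              (hE.trans hSM ((hconj P Q P (.atom a)).mpr ⟨hE.refl P, ha⟩))
              (by intro b; simp) ?_
            exact Or.inr (rfl : a = a)
          refine hfin.subset ?_
          intro R hR
          exact hE.trans (hE.symm ha) hR
        · push_neg at h
          have hQna : ∀ a : α, Q ≠ .atom a := by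
            intro a hQa
            exact h a (hQa ▸ hE.refl _)
          have hXQ : {T : BForm α | E Q T ∧ ∀ a : α, T ≠ .atom a}.Finite := by
            refine ihQ hQna Q (hE.refl Q) ?_
            intro q T hT hTna hq
            refine hyp q (.conj P T)
              (hE.trans hSM ((hconj P Q P T).mpr ⟨hE.refl P, hT⟩))
              (by intro b; simp) (Or.inr hq)
          refine hXQ.subset ?_
          intro R hR
          refine ⟨hR, ?_⟩
          intro a hRa
          exact h a (hRa ▸ hR)
      refine (Set.Finite.image2 BForm.conj hPfin hQfin).subset ?_
      rintro T ⟨hT, hTna⟩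
      have hMT : E (.conj P Q) T := hE.trans (hE.symm hSM) hT
      cases T with
      | atom a => exact absurd rfl (hTna a)
      | neg T' => exact absurd (hE.symm hMT) (hmis T' P Q)
      | conj T1 T2 =>
          obtain ⟨h1, h2⟩ := (hconj P Q T1 T2).mp hMT
          exact ⟨T1, h1, T2, h2, rfl⟩

theorem finite_definition_set {α : Type} [Fintype α] [LinearOrder α]
    (E : BForm α → BForm α → Prop) (hE : Equivalence E)
    (hneg : ∀ P Q : BForm α, E (.neg P) (.neg Q) ↔ E P Q)
    (hconj : ∀ P Q R S : BForm α, E (.conj P Q) (.conj R S) ↔ E P R ∧ E Q S)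
    (hmis : ∀ P Q R : BForm α, ¬ E (.neg P) (.conj Q R))
    (hsub : ∀ (p : α) (Q R S : BForm α) (k : ℕ), E (.atom p) Q → E R S →
      1 ≤ k → k ≤ occCount p S → E R (substOcc p Q k S))
    (hnc : ∀ (p : α) (P : BForm α), P ≠ .atom p → occurs p P → ¬ E (.atom p) P) :
    ∀ p : α, {Q : BForm α | E (.atom p) Q}.Finite := by
  classical
  -- the dependency relation among atoms
  set rel : α → α → Prop := fun q p =>
    ∃ Q : BForm α, E (.atom p) Q ∧ (∀ a : α, Q ≠ .atom a) ∧ occurs q Q with hrel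
  have htrans : Transitive rel := by
    rintro a b c ⟨Q, hQ, hQna, haQ⟩ ⟨Q', hQ', hQ'na, hbQ'⟩
    refine ⟨substOcc b Q 1 Q', ?_, ?_, ?_⟩
    · exact hsub b Q (.atom c) Q' 1 hQ hQ' le_rfl (occCount_pos_of_occurs hbQ')
    · exact substOcc_ne_atom hQ'na 1
    · exact occurs_substOcc haQ Q' 1 le_rfl (occCount_pos_of_occurs hbQ')
  have hirrefl : ∀ p : α, ¬ rel p p := by
    rintro p ⟨Q, hQ, hQna, hpQ⟩
    exact hnc p Q (hQna p) hpQ hQ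
  haveI : IsTrans α rel := ⟨fun a b c hab hbc => htrans hab hbc⟩
  haveI : IsIrrefl α rel := ⟨hirrefl⟩
  have hwf : WellFounded rel := Finite.wellFounded_of_trans_of_irrefl rel
  intro p
  induction p using WellFounded.induction hwf with
  | _ p IH =>
    have hXfin : {T : BForm α | E (.atom p) T ∧ ∀ a : α, T ≠ .atom a}.Finite := by
      rcases Set.eq_empty_or_nonempty
          {T : BForm α | E (.atom p) T ∧ ∀ a : α, T ≠ .atom a} with hemp | ⟨M, hM, hMna⟩
      · rw [hemp]; exact Set.finite_empty
      · refine key_finite E hE hneg hconj hmis M hMna (.atom p) hM ?_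
        intro q T hT hTna hq
        exact IH q ⟨T, hT, hTna, hq⟩
    have hsub' : {Q : BForm α | E (.atom p) Q} ⊆
        {T : BForm α | E (.atom p) T ∧ ∀ a : α, T ≠ .atom a} ∪ Set.range BForm.atom := by
      intro T hT
      cases T with
      | atom a => exact Or.inr ⟨a, rfl⟩
      | neg T' => exact Or.inl ⟨hT, by intro b; simp⟩
      | conj T1 T2 => exact Or.inl ⟨hT, by intro b; simp⟩
    exact (hXfin.union (Set.finite_range BForm.atom)).subset hsub'
end

section
/- In the model consisting of three worlds w1, w2, w3 with valuations V_{w1} = {p,q,r}, V_{w2} = {p,q}, V_{w3} = {p,r}, definitions DEF_{w1}(p)=r, DEF_{w2}(p)=q, DEF_{w3}(p)=r (and q,r self-evident everywhere), and R_i the total relation on {w1,w2,w3}, the middle world w2 satisfies □_i p ∧ (p ≡ q) ∧ ¬□_i(p ≡ q) ∧ ¬□_i q. -/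
def beval {α : Type} (V : α → Bool) : BForm α → Bool
  | .atom p => V p
  | .neg P => !(beval V P)
  | .conj P Q => beval V P && beval V Q

structure Model (α I W : Type) where
  R : I → W → W → Prop
  V : W → α → Bool
  DEF : W → α → BForm α
  defConsistent : ∀ w P Q, defw (DEF w) P = defw (DEF w) Q → beval (V w) P = beval (V w) Q
  wf : ∀ w p q, occurs p (DEF w q) → DEF w p = .atom p

inductive Form (α I : Type) : Type where
  | base : BForm α → Form α I
  | equiv : BForm α → BForm α → Form α I
  | neg : Form α I → Form α I
  | conj : Form α I → Form α I → Form α I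
  | box : I → Form α I → Form α I
  | ann : Form α I → Form α I → Form α I

def sat {α I W : Type} (M : Model α I W) : Set W → W → Form α I → Prop
  | _, w, .base P => beval (M.V w) P = true
  | _, w, .equiv P Q => defw (M.DEF w) P = defw (M.DEF w) Q
  | A, w, .neg φ => ¬ sat M A w φ
  | A, w, .conj φ ψ => sat M A w φ ∧ sat M A w ψ
  | A, w, .box i φ => ∀ v, v ∈ A → M.R i w v → sat M A v φ
  | A, w, .ann φ ψ => sat M A w φ → sat M {v | v ∈ A ∧ sat M A v φ} w ψ

inductive At : Type where
  | p : At
  | q : At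
  | r : At
  deriving DecidableEq

theorem knowing_without_understanding (M : Model At Unit (Fin 3))
    (hR : ∀ w v : Fin 3, M.R () w v)
    (hV : M.V = fun w a =>
      if w = 1 then (match a with | .p => true | .q => true | .r => false)
      else if w = 2 then (match a with | .p => true | .q => false | .r => true)
      else true)
    (hDEF : M.DEF = fun w a =>
      match a with
      | .p => if w = 1 then .atom .q else .atom .r
      | .q => .atom .q
      | .r => .atom .r) :
    sat M Set.univ 1
      (.conj
        (.conj (.box () (.base (.atom .p))) (.equiv (.atom .p) (.atom .q)))
        (.conj (.neg (.box () (.equiv (.atom .p) (.atom .q))))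
               (.neg (.box () (.base (.atom .q)))))) := by
  refine ⟨⟨fun v _ _ => ?_, ?_⟩, fun h => ?_, fun h => ?_⟩
  · fin_cases v <;> simp [sat, beval, hV]
  · simp [sat, hDEF, defw]
  · have := h 2 trivial (hR 1 2); simp [sat, defw, hDEF] at this
  · have := h 2 trivial (hR 1 2); simp [sat, beval, hV] at this
end
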